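/- Let T and S be bounded linear operators on H that are A-selfadjoint. Then ‖T² + S²‖_A ≤ (1/2)·(‖T²‖_A + ‖S²‖_A + √((‖T²‖_A − ‖S²‖_A)² + 4‖TS‖_A²)). -/

import Mathlib

open ContinuousLinearMap

variable {H : Type*} [NormedAddCommGroup H] [InnerProductSpace ℂ H] [CompleteSpace H]

/-- The seminorm on `H` induced by a positive operator `A`: `‖x‖_A = √⟨Ax,x⟩`. -/
noncomputable def vnA (A : H →L[ℂ] H) (x : H) : ℝ :=
  Real.sqrt (RCLike.re (inner ℂ (A x) x : ℂ))

/-- The `A`-seminorm of an operator: `‖X‖_A = sup {‖Xx‖_A : ‖x‖_A = 1}`. -/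
noncomputable def opnA (A : H →L[ℂ] H) (X : H →L[ℂ] H) : ℝ :=
  sSup ((fun x => vnA A (X x)) '' {x : H | vnA A x = 1})

/-- The `A`-numerical radius: `ω_A(X) = sup {|⟨Xx,x⟩_A| : ‖x‖_A = 1}`. -/
noncomputable def wA (A : H →L[ℂ] H) (X : H →L[ℂ] H) : ℝ :=
  sSup ((fun x => ‖(inner ℂ (A (X x)) x : ℂ)‖) '' {x : H | vnA A x = 1})

/-- `S` is the reduced `A`-adjoint of `T`: `A ∘ S = T* ∘ A` and
`range S ⊆ closure (range A)`. -/
def IsReducedAdjA (A T S : H →L[ℂ] H) : Prop :=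
  A ∘L S = (ContinuousLinearMap.adjoint T) ∘L A ∧
    Set.range S ⊆ closure (Set.range (A : H → H))

/-- `X` is `A`-selfadjoint: `A ∘ X = X* ∘ A`. -/
def IsSelfAdjA (A X : H →L[ℂ] H) : Prop :=
  A ∘L X = (ContinuousLinearMap.adjoint X) ∘L A

/-- `Re_A(T) = (T + T♯)/2`. -/
noncomputable def ReA (T Ts : H →L[ℂ] H) : H →L[ℂ] H := (2 : ℂ)⁻¹ • (T + Ts)

/-- `Im_A(T) = (T - T♯)/(2i)`. -/
noncomputable def ImA (T Ts : H →L[ℂ] H) : H →L[ℂ] H := (2 * Complex.I)⁻¹ • (T - Ts)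

/-!
Since `‖x‖_A = ‖A^{1/2} x‖`, the `A`-seminorm comes from the semi-inner product `⟨A x, y⟩`, and
`A`-selfadjoint operators are symmetric for it. Such an `X` is `A`-bounded, `‖X x‖_A ≤ ‖X‖ ‖x‖_A`:
iterate `‖X x‖_A² ≤ ‖x‖_A ‖X² x‖_A` along `X, X², X⁴, …` and take `2ⁿ`-th roots.

With `a = ‖T²‖_A`, `b = ‖S²‖_A`, `c = ‖T S‖_A`, expanding `‖T u + S v‖_A²` bounds it by the
quadratic form `a ‖u‖_A² + 2 c ‖u‖_A ‖v‖_A + b ‖v‖_A²`, hence by `λ (‖u‖_A² + ‖v‖_A²)` where `λ` is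
the largest eigenvalue of `!![a, c; c, b]`, i.e. the right-hand side. As `T² + S²` is the row
`(T S)` composed with its `A`-adjoint column, the column obeys the same bound and
`‖(T² + S²) x‖_A ≤ λ ‖x‖_A`.
-/

open scoped InnerProductSpace

/-- The largest eigenvalue of the real symmetric matrix `!![a, c; c, b]`. -/
noncomputable def maxEigenvalue2 (a b c : ℝ) : ℝ :=
  (1 / 2) * (a + b + Real.sqrt ((a - b) ^ 2 + 4 * c ^ 2))

lemma abs_sub_le_sqrt_sq_add_four_mul_sq (a b c : ℝ) :
    |a - b| ≤ Real.sqrt ((a - b) ^ 2 + 4 * c ^ 2) :=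
  Real.abs_le_sqrt (by nlinarith)

lemma le_maxEigenvalue2_left (a b c : ℝ) : a ≤ maxEigenvalue2 a b c := by
  have := abs_sub_le_sqrt_sq_add_four_mul_sq a b c
  rw [maxEigenvalue2]
  linarith [le_abs_self (a - b)]

lemma le_maxEigenvalue2_right (a b c : ℝ) : b ≤ maxEigenvalue2 a b c := by
  have := abs_sub_le_sqrt_sq_add_four_mul_sq a b c
  rw [maxEigenvalue2]
  linarith [neg_abs_le (a - b)]

lemma quadratic_le_maxEigenvalue2 (a b c s t : ℝ) :
    a * s ^ 2 + 2 * c * s * t + b * t ^ 2 ≤ maxEigenvalue2 a b c * (s ^ 2 + t ^ 2) := by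
  set l := maxEigenvalue2 a b c
  have hla : 0 ≤ l - a := sub_nonneg.mpr (le_maxEigenvalue2_left a b c)
  have hlb : 0 ≤ l - b := sub_nonneg.mpr (le_maxEigenvalue2_right a b c)
  have hprod : (l - a) * (l - b) = c ^ 2 := by
    have := Real.sq_sqrt (show 0 ≤ (a - b) ^ 2 + 4 * c ^ 2 by positivity)
    simp only [l, maxEigenvalue2]
    linear_combination this / 4
  rcases (add_nonneg hla hlb).eq_or_lt with hsum | hsum
  · have hc : c = 0 := by nlinarith
    subst hc
    nlinarith
  · refine le_of_sub_nonneg (nonneg_of_mul_nonneg_right ?_ hsum)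
    -- with `p = l - a`, `q = l - b` and `p q = c²`:
    -- `(p + q) (p s² - 2 c s t + q t²) = (p s - c t)² + (q t - c s)²`
    nlinarith [sq_nonneg ((l - a) * s - c * t), sq_nonneg ((l - b) * t - c * s)]

lemma le_of_forall_pow_two_pow_le {r K C : ℝ} (hK : 0 ≤ K)
    (h : ∀ n : ℕ, r ^ 2 ^ n ≤ C * K ^ 2 ^ n) : r ≤ K := by
  by_contra! hKr
  rcases hK.eq_or_lt with rfl | hK
  · have := h 0
    simp only [pow_zero, pow_one, mul_zero] at this
    linarith
  · have hq : 1 < r / K := (one_lt_div hK).mpr hKr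
    obtain ⟨m, hm⟩ := pow_unbounded_of_one_lt C hq
    have hle : (r / K) ^ 2 ^ m ≤ C := by
      rw [div_pow, div_le_iff₀ (by positivity)]
      exact h m
    linarith [pow_le_pow_right₀ hq.le (Nat.lt_two_pow_self (n := m)).le]

section Seminorm

variable {E : Type*} [NormedAddCommGroup E] [InnerProductSpace ℂ E] {A : E →L[ℂ] E}

lemma vnA_nonneg (A : E →L[ℂ] E) (x : E) : 0 ≤ vnA A x := Real.sqrt_nonneg _

lemma vnA_sq (hA : A.IsPositive) (x : E) : vnA A x ^ 2 = RCLike.re ⟪A x, x⟫_ℂ :=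
  Real.sq_sqrt (hA.re_inner_nonneg_left x)

lemma vnA_smul (A : E →L[ℂ] E) (μ : ℂ) (x : E) : vnA A (μ • x) = ‖μ‖ * vnA A x := by
  rw [vnA, vnA, map_smul, inner_smul_left, inner_smul_right, ← mul_assoc, RCLike.conj_mul,
    ← RCLike.ofReal_pow, RCLike.re_ofReal_mul, Real.sqrt_mul (sq_nonneg _),
    Real.sqrt_sq (norm_nonneg μ)]

lemma opnA_nonneg (A X : E →L[ℂ] E) : 0 ≤ opnA A X :=
  Real.sSup_nonneg (by rintro _ ⟨x, _, rfl⟩; exact vnA_nonneg A _)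

lemma vnA_apply_le_opnA {X : E →L[ℂ] E} {K : ℝ} (hK : ∀ z, vnA A (X z) ≤ K * vnA A z)
    (z : E) : vnA A (X z) ≤ opnA A X * vnA A z := by
  rcases (vnA_nonneg A z).eq_or_lt with hz | hz
  · rw [← hz, mul_zero]
    simpa [← hz] using hK z
  · have hbdd : BddAbove ((fun x => vnA A (X x)) '' {x : E | vnA A x = 1}) := by
      refine ⟨K, ?_⟩
      rintro _ ⟨w, hw, rfl⟩
      simpa [show vnA A w = 1 from hw] using hK w
    have hnorm : ‖((vnA A z)⁻¹ : ℂ)‖ = (vnA A z)⁻¹ := by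
      rw [norm_inv, Complex.norm_of_nonneg hz.le]
    have hunit : vnA A (((vnA A z)⁻¹ : ℂ) • z) = 1 := by
      rw [vnA_smul, hnorm, inv_mul_cancel₀ hz.ne']
    have : vnA A (X (((vnA A z)⁻¹ : ℂ) • z)) ≤ opnA A X := le_csSup hbdd ⟨_, hunit, rfl⟩
    rw [map_smul, vnA_smul, hnorm, inv_mul_le_iff₀ hz, mul_comm] at this
    exact this

end Seminorm

section SquareRoot

variable {A : H →L[ℂ] H}

lemma inner_apply_eq_inner_sqrt (hA : A.IsPositive) (x y : H) :
    ⟪A x, y⟫_ℂ = ⟪CFC.sqrt A x, CFC.sqrt A y⟫_ℂ := by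
  have hR : IsSelfAdjoint (CFC.sqrt A) := .of_nonneg (CFC.sqrt_nonneg A)
  conv_lhs => rw [← CFC.sqrt_mul_sqrt_self A ((nonneg_iff_isPositive A).mpr hA)]
  rw [mul_apply_eq_comp, ← adjoint_inner_right, hR.adjoint_eq]

lemma vnA_eq_norm_sqrt (hA : A.IsPositive) (x : H) : vnA A x = ‖CFC.sqrt A x‖ := by
  rw [vnA, inner_apply_eq_inner_sqrt hA, inner_self_eq_norm_sq, Real.sqrt_sq (norm_nonneg _)]

lemma re_inner_apply_le (hA : A.IsPositive) (x y : H) :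
    RCLike.re ⟪A x, y⟫_ℂ ≤ vnA A x * vnA A y := by
  rw [inner_apply_eq_inner_sqrt hA, vnA_eq_norm_sqrt hA, vnA_eq_norm_sqrt hA]
  exact re_inner_le_norm _ _

lemma vnA_add_sq (hA : A.IsPositive) (x y : H) :
    vnA A (x + y) ^ 2 = vnA A x ^ 2 + 2 * RCLike.re ⟪A x, y⟫_ℂ + vnA A y ^ 2 := by
  simp only [vnA_eq_norm_sqrt hA, map_add, inner_apply_eq_inner_sqrt hA]
  exact norm_add_sq _ _

lemma vnA_le_norm (hA : A.IsPositive) (x : H) : vnA A x ≤ ‖CFC.sqrt A‖ * ‖x‖ := by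
  rw [vnA_eq_norm_sqrt hA]
  exact le_opNorm _ _

end SquareRoot

lemma isSelfAdjA_iff {A X : H →L[ℂ] H} : IsSelfAdjA A X ↔ A * X = star X * A := Iff.rfl

namespace IsSelfAdjA

variable {A X : H →L[ℂ] H}

lemma inner_apply_left (hX : IsSelfAdjA A X) (u v : H) : ⟪A (X u), v⟫_ℂ = ⟪A u, X v⟫_ℂ := by
  rw [show A (X u) = adjoint X (A u) from DFunLike.congr_fun hX u, adjoint_inner_left]

lemma pow (hX : IsSelfAdjA A X) (n : ℕ) : IsSelfAdjA A (X ^ n) := by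
  rw [isSelfAdjA_iff] at hX ⊢
  induction n with
  | zero => simp
  | succ n ih =>
    calc A * X ^ (n + 1) = star (X ^ n) * (A * X) := by rw [pow_succ, ← mul_assoc, ih, mul_assoc]
      _ = star (X ^ (n + 1)) * A := by rw [hX, ← mul_assoc, ← star_mul, ← pow_succ']

lemma vnA_apply_sq_le (hA : A.IsPositive) (hX : IsSelfAdjA A X) (x : H) :
    vnA A (X x) ^ 2 ≤ vnA A x * vnA A (X (X x)) := by
  rw [vnA_sq hA, hX.inner_apply_left]
  exact re_inner_apply_le hA _ _

lemma vnA_apply_le_opNorm (hA : A.IsPositive) (hX : IsSelfAdjA A X) (x : H) :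
    vnA A (X x) ≤ ‖X‖ * vnA A x := by
  rcases (vnA_nonneg A x).eq_or_lt with hx | hx
  · have := hX.vnA_apply_sq_le hA x
    rw [← hx, zero_mul] at this
    rw [← hx, mul_zero]
    nlinarith [vnA_nonneg A (X x)]
  have iterate : ∀ n : ℕ, (vnA A (X x) / vnA A x) ^ 2 ^ n ≤ vnA A ((X ^ 2 ^ n) x) / vnA A x := by
    intro n
    induction n with
    | zero => simp
    | succ n ih =>
      have step := (hX.pow (2 ^ n)).vnA_apply_sq_le hA x
      rw [← mul_apply_eq_comp, ← pow_add, ← two_mul, ← pow_succ'] at step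
      calc (vnA A (X x) / vnA A x) ^ 2 ^ (n + 1)
          = ((vnA A (X x) / vnA A x) ^ 2 ^ n) ^ 2 := by rw [pow_succ, pow_mul]
        _ ≤ (vnA A ((X ^ 2 ^ n) x) / vnA A x) ^ 2 := by
          gcongr
          exact pow_nonneg (div_nonneg (vnA_nonneg A _) hx.le) _
        _ ≤ vnA A ((X ^ 2 ^ (n + 1)) x) / vnA A x := by
          rw [div_pow, div_le_div_iff₀ (pow_pos hx 2) hx]
          nlinarith
  refine (div_le_iff₀ hx).mp (le_of_forall_pow_two_pow_le (C := ‖CFC.sqrt A‖ * ‖x‖ / vnA A x)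
    (norm_nonneg X) fun n => (iterate n).trans ?_)
  rw [div_mul_eq_mul_div]
  gcongr
  calc vnA A ((X ^ 2 ^ n) x) ≤ ‖CFC.sqrt A‖ * ‖(X ^ 2 ^ n) x‖ := vnA_le_norm hA _
    _ ≤ ‖CFC.sqrt A‖ * (‖X‖ ^ 2 ^ n * ‖x‖) := by
      gcongr
      exact (le_opNorm _ _).trans (by gcongr; exact norm_pow_le' X (Nat.two_pow_pos n))
    _ = ‖CFC.sqrt A‖ * ‖x‖ * ‖X‖ ^ 2 ^ n := by ring

end IsSelfAdjA

section RowColumn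

variable {A T S : H →L[ℂ] H}

lemma vnA_apply_add_apply_sq_le (hA : A.IsPositive) (hT : IsSelfAdjA A T) (hS : IsSelfAdjA A S)
    {a b c : ℝ} (ha : ∀ z, vnA A ((T ^ 2) z) ≤ a * vnA A z)
    (hb : ∀ z, vnA A ((S ^ 2) z) ≤ b * vnA A z) (hc : ∀ z, vnA A ((T ∘L S) z) ≤ c * vnA A z)
    (u v : H) :
    vnA A (T u + S v) ^ 2 ≤ maxEigenvalue2 a b c * (vnA A u ^ 2 + vnA A v ^ 2) := by
  simp only [sq T, sq S, mul_apply_eq_comp, comp_apply] at ha hb hc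
  have hTu : vnA A (T u) ^ 2 ≤ a * vnA A u ^ 2 := by
    nlinarith [hT.vnA_apply_sq_le hA u, ha u, vnA_nonneg A u]
  have hSv : vnA A (S v) ^ 2 ≤ b * vnA A v ^ 2 := by
    nlinarith [hS.vnA_apply_sq_le hA v, hb v, vnA_nonneg A v]
  have hcross : RCLike.re ⟪A (T u), S v⟫_ℂ ≤ c * vnA A u * vnA A v := by
    rw [hT.inner_apply_left]
    nlinarith [re_inner_apply_le hA u (T (S v)), hc v, vnA_nonneg A u]
  calc vnA A (T u + S v) ^ 2
      = vnA A (T u) ^ 2 + 2 * RCLike.re ⟪A (T u), S v⟫_ℂ + vnA A (S v) ^ 2 := vnA_add_sq hA _ _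
    _ ≤ a * vnA A u ^ 2 + 2 * c * vnA A u * vnA A v + b * vnA A v ^ 2 := by linarith
    _ ≤ maxEigenvalue2 a b c * (vnA A u ^ 2 + vnA A v ^ 2) := quadratic_le_maxEigenvalue2 ..

lemma vnA_apply_sq_add_vnA_apply_sq_le (hA : A.IsPositive) (hT : IsSelfAdjA A T)
    (hS : IsSelfAdjA A S) {l : ℝ} (hl : 0 ≤ l)
    (hrow : ∀ u v, vnA A (T u + S v) ^ 2 ≤ l * (vnA A u ^ 2 + vnA A v ^ 2)) (y : H) :
    vnA A (T y) ^ 2 + vnA A (S y) ^ 2 ≤ l * vnA A y ^ 2 := by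
  set g := vnA A (T y) ^ 2 + vnA A (S y) ^ 2
  set w := T (T y) + S (S y)
  have hgw : g ≤ vnA A y * vnA A w := by
    calc g = RCLike.re ⟪A y, w⟫_ℂ := by
          simp only [g, w]
          rw [inner_add_right, map_add, vnA_sq hA, vnA_sq hA, hT.inner_apply_left,
            hS.inner_apply_left]
      _ ≤ vnA A y * vnA A w := re_inner_apply_le hA _ _
  rcases (show 0 ≤ g by positivity).eq_or_lt with hg | hg
  · rw [← hg]
    exact mul_nonneg hl (sq_nonneg _)
  · refine le_of_mul_le_mul_right ?_ hg
    calc g * g ≤ vnA A y ^ 2 * vnA A w ^ 2 := by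
          rw [← mul_pow, sq]
          exact mul_self_le_mul_self hg.le hgw
      _ ≤ vnA A y ^ 2 * (l * g) := by gcongr; exact hrow (T y) (S y)
      _ = l * vnA A y ^ 2 * g := by ring

lemma vnA_sq_add_sq_apply_le (hA : A.IsPositive) (hT : IsSelfAdjA A T) (hS : IsSelfAdjA A S)
    {l : ℝ} (hl : 0 ≤ l)
    (hrow : ∀ u v, vnA A (T u + S v) ^ 2 ≤ l * (vnA A u ^ 2 + vnA A v ^ 2)) (x : H) :
    vnA A ((T ^ 2 + S ^ 2) x) ≤ l * vnA A x := by
  have hcol := vnA_apply_sq_add_vnA_apply_sq_le hA hT hS hl hrow x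
  have hsq : vnA A ((T ^ 2 + S ^ 2) x) ^ 2 ≤ (l * vnA A x) ^ 2 := by
    calc vnA A ((T ^ 2 + S ^ 2) x) ^ 2 ≤ l * (vnA A (T x) ^ 2 + vnA A (S x) ^ 2) := by
          simpa only [add_apply, sq T, sq S, mul_apply_eq_comp] using hrow (T x) (S x)
      _ ≤ (l * vnA A x) ^ 2 := by nlinarith
  exact (pow_le_pow_iff_left₀ (vnA_nonneg A _) (mul_nonneg hl (vnA_nonneg A x)) two_ne_zero).mp hsq

end RowColumn

theorem stmt1_general (A T S : H →L[ℂ] H) (hA : A.IsPositive)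
    (hT : IsSelfAdjA A T) (hS : IsSelfAdjA A S) :
    opnA A (T ^ (2:ℕ) + S ^ (2:ℕ)) ≤
      (1/2) * (opnA A (T ^ (2:ℕ)) + opnA A (S ^ (2:ℕ)) +
        Real.sqrt ((opnA A (T ^ (2:ℕ)) - opnA A (S ^ (2:ℕ)))^2 +
          4 * (opnA A (T ∘L S))^2)) := by
  have hTS (z : H) : vnA A ((T ∘L S) z) ≤ (‖T‖ * ‖S‖) * vnA A z := by
    calc vnA A (T (S z)) ≤ ‖T‖ * vnA A (S z) := hT.vnA_apply_le_opNorm hA _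
      _ ≤ ‖T‖ * (‖S‖ * vnA A z) := by gcongr; exact hS.vnA_apply_le_opNorm hA z
      _ = _ := (mul_assoc _ _ _).symm
  have hrow := vnA_apply_add_apply_sq_le hA hT hS
    (vnA_apply_le_opnA ((hT.pow 2).vnA_apply_le_opNorm hA))
    (vnA_apply_le_opnA ((hS.pow 2).vnA_apply_le_opNorm hA)) (vnA_apply_le_opnA hTS)
  have hl : 0 ≤ maxEigenvalue2 (opnA A (T ^ 2)) (opnA A (S ^ 2)) (opnA A (T ∘L S)) :=
    (opnA_nonneg A _).trans (le_maxEigenvalue2_left _ _ _)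
  refine Real.sSup_le ?_ hl
  rintro _ ⟨x, hx, rfl⟩
  have hxbound := vnA_sq_add_sq_apply_le hA hT hS hl hrow x
  rw [show vnA A x = 1 from hx, mul_one] at hxbound
  exact hxbound

theorem stmt1 (A T S : H →L[ℂ] H) (hA : A.IsPositive) (hA0 : A ≠ 0)
    (hT : IsSelfAdjA A T) (hS : IsSelfAdjA A S) :
    opnA A (T ^ (2:ℕ) + S ^ (2:ℕ)) ≤
      (1/2) * (opnA A (T ^ (2:ℕ)) + opnA A (S ^ (2:ℕ)) +
        Real.sqrt ((opnA A (T ^ (2:ℕ)) - opnA A (S ^ (2:ℕ)))^2 +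
          4 * (opnA A (T ∘L S))^2)) :=
  stmt1_general A T S hA hT hS
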